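/- arXiv:2411.12944 — 2 statements merged into one kernel-verified Lean document; each statement's English description precedes it below -/
import Mathlib

section
/- (Corollary 2.) Under Assumption 1, with E_jk[ε_jk²/π_j(Z)] < ∞ and E_jk[ε_kj²/π_k(Z)] < ∞, let Σ_aipw = diag( E_jk[ε_jk²/π_j(Z)], E_jk[ε_kj²/π_k(Z)] ) + Λ_jk − δδᵀ and Σ_saipw = diag( E_jk[(ε_jk−δ_jk)²/π_j(Z)], E_jk[(ε_kj−δ_kj)²/π_k(Z)] ) + Λ_jk, where δ = (δ_jk, δ_kj)ᵀ and Λ_jk is the 2×2 matrix with diagonal (λ_jk, λ_kj) and both off-diagonal entries c_jk. Then Σ_aipw − Σ_saipw = N₁ + N₂, where N₁ has diagonal entries δ_jk² E_jk[1/π_j(Z) − 1] and δ_kj² E_jk[1/π_k(Z) − 1] and both off-diagonal entries −δ_jk δ_kj, and N₂ = 2 · diag( δ_jk Cov_jk(ε_jk, 1/π_j(Z)), δ_kj Cov_jk(ε_kj, 1/π_k(Z)) ). Moreover, if π_j(Z) + π_k(Z) ≤ 1 almost surely on the ECE event then N₁ is positive semidefinite, and if additionally δ_jk Cov_jk(ε_jk,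 1/π_j(Z)) ≥ 0 and δ_kj Cov_jk(ε_kj, 1/π_k(Z)) ≥ 0 then Σ_aipw − Σ_saipw is positive semidefinite. -/
/-!
Expanding the square, `E[(ε - δ)²/π] = E[ε²/π] - 2δ E[ε/π] + δ² E[1/π]`, and
`E[ε/π] = Cov(ε, 1/π) + δ E[1/π]` since `δ = E[ε]`; this gives the diagonal of
`Σ_aipw - Σ_saipw`, while `Λ_jk` cancels and the off-diagonal entries are `-δ_jk δ_kj`.
If `π_j + π_k ≤ 1` then `1/π_j - 1 ≥ π_k/π_j` and `1/π_k - 1 ≥ π_j/π_k`, so the quadratic form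
of `N₁` at `(x, y)` dominates `E[(u π_k - v π_j)² / (π_j π_k)] ≥ 0` with `u = δ_jk x`, `v = δ_kj y`.
-/

open MeasureTheory ProbabilityTheory Filter Set

noncomputable section

/-- Covariance of two real-valued random variables under the measure `μ`. -/
def cov {Ω : Type*} [MeasurableSpace Ω] (μ : Measure Ω) (f g : Ω → ℝ) : ℝ :=
  ∫ ω, (f ω - ∫ x, f x ∂μ) * (g ω - ∫ x, g x ∂μ) ∂μ

lemma Matrix.posSemidef_fin_two_of_nonneg {a b d : ℝ}
    (h : ∀ x y : ℝ, 0 ≤ a * x ^ 2 + 2 * b * x * y + d * y ^ 2) :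
    Matrix.PosSemidef !![a, b; b, d] := by
  rw [Matrix.posSemidef_iff_dotProduct_mulVec]
  refine ⟨?_, fun x => ?_⟩
  · ext i j
    fin_cases i <;> fin_cases j <;> simp [Matrix.conjTranspose_apply]
  · have := h (x 0) (x 1)
    simp only [dotProduct, Pi.star_apply, star_trivial, Matrix.mulVec, Matrix.of_apply,
      Matrix.cons_val', Matrix.cons_val_fin_one, Fin.sum_univ_two, Fin.isValue,
      Matrix.cons_val_zero, Matrix.cons_val_one]
    nlinarith

lemma two_mul_le_sq_mul_one_div_sub_one_add {a b : ℝ} (ha : 0 < a) (hb : 0 < b) (hab : a + b ≤ 1)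
    (u v : ℝ) : 2 * (u * v) ≤ u ^ 2 * (1 / a - 1) + v ^ 2 * (1 / b - 1) := by
  have hb_div : b / a ≤ 1 / a - 1 := by
    rw [div_sub_one ha.ne', div_le_div_iff_of_pos_right ha]; linarith
  have ha_div : a / b ≤ 1 / b - 1 := by
    rw [div_sub_one hb.ne', div_le_div_iff_of_pos_right hb]; linarith
  have amgm : 2 * (u * v) ≤ u ^ 2 * (b / a) + v ^ 2 * (a / b) := by
    have : u ^ 2 * (b / a) + v ^ 2 * (a / b) - 2 * (u * v) = (u * b - v * a) ^ 2 / (a * b) := by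
      field_simp; ring
    have := div_nonneg (sq_nonneg (u * b - v * a)) (mul_pos ha hb).le
    linarith
  nlinarith [mul_le_mul_of_nonneg_left hb_div (sq_nonneg u),
    mul_le_mul_of_nonneg_left ha_div (sq_nonneg v)]

lemma MeasureTheory.Integrable.cond {Ω : Type*} [MeasurableSpace Ω] {μ : Measure Ω}
    {f : Ω → ℝ} (hf : Integrable f μ) {s : Set Ω} (hs : μ s ≠ 0) : Integrable f μ[|s] :=
  hf.restrict.smul_measure (ENNReal.inv_ne_top.mpr hs)

section

variable {Ω : Type*} [MeasurableSpace Ω] {μ : Measure Ω} [IsProbabilityMeasure μ]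

lemma cov_eq_integral_mul_sub {f g : Ω → ℝ} (hf : Integrable f μ) (hg : Integrable g μ)
    (hfg : Integrable (fun ω => f ω * g ω) μ) :
    cov μ f g = ∫ ω, f ω * g ω ∂μ - (∫ ω, f ω ∂μ) * ∫ ω, g ω ∂μ := by
  simp_rw [cov, sub_mul, mul_sub]
  rw [integral_sub ?_ ?_, integral_sub hfg (hf.mul_const _),
    integral_sub (hg.const_mul _) (integrable_const _), integral_mul_const, integral_const_mul,
    integral_const, probReal_univ, one_smul]
  · ring
  · exact hfg.sub (hf.mul_const _)
  · exact (hg.const_mul _).sub (integrable_const _)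

lemma integral_one_div_sub_one {p : Ω → ℝ} (hp : Integrable (fun ω => 1 / p ω) μ) :
    ∫ ω, (1 / p ω - 1) ∂μ = ∫ ω, 1 / p ω ∂μ - 1 := by
  rw [integral_sub hp (integrable_const _), integral_const, probReal_univ, one_smul]

lemma integral_sq_div_sub_integral_centered_sq_div {ε p : Ω → ℝ} (hε : Integrable ε μ)
    (hε2 : Integrable (fun ω => ε ω ^ 2 / p ω) μ) (hp : Integrable (fun ω => 1 / p ω) μ)
    (hεp : Integrable (fun ω => ε ω / p ω) μ) :
    ∫ ω, ε ω ^ 2 / p ω ∂μ - (∫ ω, ε ω ∂μ) * (∫ ω, ε ω ∂μ)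
        - ∫ ω, (ε ω - ∫ ω, ε ω ∂μ) ^ 2 / p ω ∂μ
      = (∫ ω, ε ω ∂μ) ^ 2 * ∫ ω, (1 / p ω - 1) ∂μ
        + 2 * ((∫ ω, ε ω ∂μ) * cov μ ε (fun ω => 1 / p ω)) := by
  set δ := ∫ ω, ε ω ∂μ
  have hexpand : (fun ω => (ε ω - δ) ^ 2 / p ω)
      = fun ω => ε ω ^ 2 / p ω - 2 * δ * (ε ω / p ω) + δ ^ 2 * (1 / p ω) := by
    ext ω; ring
  have hcov : cov μ ε (fun ω => 1 / p ω) = ∫ ω, ε ω / p ω ∂μ - δ * ∫ ω, 1 / p ω ∂μ := by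
    simpa only [mul_one_div] using
      cov_eq_integral_mul_sub hε hp (by simpa only [mul_one_div] using hεp)
  rw [hexpand, integral_add ?_ (hp.const_mul _),
    integral_sub hε2 (hεp.const_mul _), integral_const_mul, integral_const_mul, hcov,
    integral_one_div_sub_one hp]
  · ring
  · exact hε2.sub (hεp.const_mul _)

lemma two_mul_le_integral_one_div_sub_one {a b : Ω → ℝ} (ha : Integrable (fun ω => 1 / a ω) μ)
    (hb : Integrable (fun ω => 1 / b ω) μ) (hab : ∀ᵐ ω ∂μ, 0 < a ω ∧ 0 < b ω ∧ a ω + b ω ≤ 1)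
    (u v : ℝ) :
    2 * (u * v) ≤ u ^ 2 * ∫ ω, (1 / a ω - 1) ∂μ + v ^ 2 * ∫ ω, (1 / b ω - 1) ∂μ := by
  have hua : Integrable (fun ω => u ^ 2 * (1 / a ω - 1)) μ :=
    (ha.sub (integrable_const _)).const_mul _
  have hvb : Integrable (fun ω => v ^ 2 * (1 / b ω - 1)) μ :=
    (hb.sub (integrable_const _)).const_mul _
  calc 2 * (u * v) = ∫ _, 2 * (u * v) ∂μ := by simp
    _ ≤ ∫ ω, (u ^ 2 * (1 / a ω - 1) + v ^ 2 * (1 / b ω - 1)) ∂μ :=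
      integral_mono_ae (integrable_const _) (hua.add hvb) <| hab.mono fun ω ⟨ha, hb, hab⟩ =>
        two_mul_le_sq_mul_one_div_sub_one_add ha hb hab u v
    _ = _ := by rw [integral_add hua hvb, integral_const_mul, integral_const_mul]

end

theorem stmt_13_general
    {Ω 𝓩 : Type*} [MeasurableSpace Ω]
    [MeasurableSpace 𝓩]
    (P : Measure Ω) [IsProbabilityMeasure P]
    {J : ℕ} (Z : Ω → 𝓩) (Y : Fin J → Ω → ℝ)
    (hZ : Measurable Z)
    (hY2 : ∀ m, MemLp (Y m) 2 P)
    (π : Fin J → 𝓩 → ℝ) (hπmeas : ∀ m, Measurable (π m))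
    (j k : Fin J)
    -- the ECE event, with positive probability
    (ECE : Set Ω) (hECE : ECE = {ω | 0 < π j (Z ω) ∧ 0 < π k (Z ω)})
    (hECEpos : P ECE ≠ 0)
    -- working model: a covariate sub-vector X of W and a function μjk of X
    {𝓧 : Type*} [MeasurableSpace 𝓧]
    (X : Ω → 𝓧)
    (μjk : 𝓧 → ℝ) (hμjk2 : MemLp (fun ω => μjk (X ω)) 2 P)
    (μkj : 𝓧 → ℝ) (hμkj2 : MemLp (fun ω => μkj (X ω)) 2 P)
    -- residuals, δ's, λ's and c_jk
    (εjk εkj : Ω → ℝ)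
    (hεjk : ∀ ω, εjk ω = Y j ω - μjk (X ω)) (hεkj : ∀ ω, εkj ω = Y k ω - μkj (X ω))
    (δjk δkj : ℝ)
    (hδjk : δjk = ∫ ω, εjk ω ∂P[|ECE]) (hδkj : δkj = ∫ ω, εkj ω ∂P[|ECE])
    -- finiteness of the displayed conditional moments
    (hIntj : Integrable (fun ω => εjk ω ^ 2 / π j (Z ω)) P[|ECE])
    (hIntk : Integrable (fun ω => εkj ω ^ 2 / π k (Z ω)) P[|ECE])
    (hIntj1 : Integrable (fun ω => 1 / π j (Z ω)) P[|ECE])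
    (hIntk1 : Integrable (fun ω => 1 / π k (Z ω)) P[|ECE])
    (hIntjε : Integrable (fun ω => εjk ω / π j (Z ω)) P[|ECE])
    (hIntkε : Integrable (fun ω => εkj ω / π k (Z ω)) P[|ECE])
    -- the matrices
    (Λjk Saipw Ssaipw N₁ N₂ : Matrix (Fin 2) (Fin 2) ℝ)
    (hSaipw : Saipw =
      !![∫ ω, εjk ω ^ 2 / π j (Z ω) ∂P[|ECE], 0;
         0, ∫ ω, εkj ω ^ 2 / π k (Z ω) ∂P[|ECE]]
      + Λjk - !![δjk * δjk, δjk * δkj; δkj * δjk, δkj * δkj])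
    (hSsaipw : Ssaipw =
      !![∫ ω, (εjk ω - δjk) ^ 2 / π j (Z ω) ∂P[|ECE], 0;
         0, ∫ ω, (εkj ω - δkj) ^ 2 / π k (Z ω) ∂P[|ECE]]
      + Λjk)
    (hN₁ : N₁ =
      !![δjk ^ 2 * ∫ ω, (1 / π j (Z ω) - 1) ∂P[|ECE], -(δjk * δkj);
         -(δjk * δkj), δkj ^ 2 * ∫ ω, (1 / π k (Z ω) - 1) ∂P[|ECE]])
    (hN₂ : N₂ =
      !![2 * (δjk * cov P[|ECE] εjk (fun ω => 1 / π j (Z ω))), 0;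
         0, 2 * (δkj * cov P[|ECE] εkj (fun ω => 1 / π k (Z ω)))]) :
    Saipw - Ssaipw = N₁ + N₂
    ∧ ((∀ᵐ ω ∂P[|ECE], π j (Z ω) + π k (Z ω) ≤ 1) → N₁.PosSemidef)
    ∧ ((∀ᵐ ω ∂P[|ECE], π j (Z ω) + π k (Z ω) ≤ 1) →
        0 ≤ δjk * cov P[|ECE] εjk (fun ω => 1 / π j (Z ω)) →
        0 ≤ δkj * cov P[|ECE] εkj (fun ω => 1 / π k (Z ω)) →
        (Saipw - Ssaipw).PosSemidef) := by
  have hECE_meas : MeasurableSet ECE := hECE ▸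
    (measurableSet_lt measurable_const ((hπmeas j).comp hZ)).inter
      (measurableSet_lt measurable_const ((hπmeas k).comp hZ))
  have := cond_isProbabilityMeasure (μ := P) hECEpos
  have hεjk_int : Integrable εjk P[|ECE] := funext hεjk ▸
    (((hY2 j).integrable one_le_two).sub (hμjk2.integrable one_le_two)).cond hECEpos
  have hεkj_int : Integrable εkj P[|ECE] := funext hεkj ▸
    (((hY2 k).integrable one_le_two).sub (hμkj2.integrable one_le_two)).cond hECEpos
  have hdecomp : Saipw - Ssaipw = N₁ + N₂ := by
    have hj := integral_sq_div_sub_integral_centered_sq_div hεjk_int hIntj hIntj1 hIntjε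
    have hk := integral_sq_div_sub_integral_centered_sq_div hεkj_int hIntk hIntk1 hIntkε
    rw [← hδjk] at hj
    rw [← hδkj] at hk
    subst hSaipw hSsaipw hN₁ hN₂
    ext a b
    fin_cases a <;> fin_cases b <;>
      simp only [Matrix.sub_apply, Matrix.add_apply, Matrix.of_apply, Matrix.cons_val',
        Matrix.cons_val_zero, Matrix.cons_val_one, Matrix.cons_val_fin_one, Fin.isValue,
        Fin.zero_eta, Fin.mk_one] <;>
      linarith
  have hN₁_psd (hle : ∀ᵐ ω ∂P[|ECE], π j (Z ω) + π k (Z ω) ≤ 1) : N₁.PosSemidef := by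
    have hpos : ∀ᵐ ω ∂P[|ECE], 0 < π j (Z ω) ∧ 0 < π k (Z ω) ∧ π j (Z ω) + π k (Z ω) ≤ 1 := by
      filter_upwards [ae_cond_mem hECE_meas, hle] with ω hω hle
      rw [hECE] at hω
      exact ⟨hω.1, hω.2, hle⟩
    rw [hN₁]
    refine Matrix.posSemidef_fin_two_of_nonneg fun x y => ?_
    nlinarith [two_mul_le_integral_one_div_sub_one hIntj1 hIntk1 hpos (δjk * x) (δkj * y)]
  refine ⟨hdecomp, hN₁_psd, fun hle hcj hck => ?_⟩
  rw [hdecomp, hN₂, ← Matrix.diagonal_vec2]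
  refine (hN₁_psd hle).add (Matrix.PosSemidef.diagonal fun i => ?_)
  fin_cases i
  exacts [mul_nonneg zero_le_two hcj, mul_nonneg zero_le_two hck]

/-- Corollary 2: decomposition of Σ_aipw − Σ_saipw and positive
semidefiniteness. -/
theorem stmt_13
    {Ω 𝓩 𝓦 : Type*} [MeasurableSpace Ω] [StandardBorelSpace Ω]
    [MeasurableSpace 𝓩] [MeasurableSpace 𝓦]
    (P : Measure Ω) [IsProbabilityMeasure P]
    {J : ℕ} (Z : Ω → 𝓩) (W : Ω → 𝓦) (A : Ω → Fin J) (Y : Fin J → Ω → ℝ)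
    (hZ : Measurable Z) (hW : Measurable W) (hA : Measurable A)
    (hY : ∀ m, Measurable (Y m)) (hY2 : ∀ m, MemLp (Y m) 2 P)
    (π : Fin J → 𝓩 → ℝ) (hπmeas : ∀ m, Measurable (π m))
    (hπ01 : ∀ m z, π m z ∈ Set.Icc (0:ℝ) 1)
    (hπsum : ∀ z, ∑ m, π m z = 1)
    -- Assumption 1: A ⟂ (W, Y^(1),…,Y^(J)) given Z
    (hCI : CondIndepFun (MeasurableSpace.comap Z inferInstance) hZ.comap_le A
        (fun ω => (W ω, fun m => Y m ω)) P)
    -- Assumption 1: P(A = m | Z) = π_m(Z) a.s.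
    (hprop : ∀ m : Fin J,
      (P[ Set.indicator {ω' | A ω' = m} (fun _ => (1:ℝ)) | MeasurableSpace.comap Z inferInstance])
        =ᵐ[P] fun ω => π m (Z ω))
    (j k : Fin J) (hjk : j ≠ k)
    -- the ECE event, with positive probability
    (ECE : Set Ω) (hECE : ECE = {ω | 0 < π j (Z ω) ∧ 0 < π k (Z ω)})
    (hECEpos : P ECE ≠ 0)
    -- working model: a covariate sub-vector X of W and a function μjk of X
    {𝓧 : Type*} [MeasurableSpace 𝓧]
    (X : Ω → 𝓧) (hXW : ∃ g : 𝓦 → 𝓧, Measurable g ∧ ∀ ω, X ω = g (W ω))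
    (μjk : 𝓧 → ℝ) (hμjkm : Measurable μjk) (hμjk2 : MemLp (fun ω => μjk (X ω)) 2 P)
    (μkj : 𝓧 → ℝ) (hμkjm : Measurable μkj) (hμkj2 : MemLp (fun ω => μkj (X ω)) 2 P)
    -- residuals, δ's, λ's and c_jk
    (εjk εkj : Ω → ℝ)
    (hεjk : ∀ ω, εjk ω = Y j ω - μjk (X ω)) (hεkj : ∀ ω, εkj ω = Y k ω - μkj (X ω))
    (δjk δkj : ℝ)
    (hδjk : δjk = ∫ ω, εjk ω ∂P[|ECE]) (hδkj : δkj = ∫ ω, εkj ω ∂P[|ECE])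
    (lamjk lamkj : ℝ)
    (hlamjk : lamjk = variance (Y j) P[|ECE] - variance εjk P[|ECE])
    (hlamkj : lamkj = variance (Y k) P[|ECE] - variance εkj P[|ECE])
    (cjk : ℝ) (hcjk : cjk = cov P[|ECE] (Y j) (Y k) - cov P[|ECE] εjk εkj)
    -- finiteness of the displayed conditional moments
    (hIntj : Integrable (fun ω => εjk ω ^ 2 / π j (Z ω)) P[|ECE])
    (hIntk : Integrable (fun ω => εkj ω ^ 2 / π k (Z ω)) P[|ECE])
    (hIntj1 : Integrable (fun ω => 1 / π j (Z ω)) P[|ECE])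
    (hIntk1 : Integrable (fun ω => 1 / π k (Z ω)) P[|ECE])
    (hIntjε : Integrable (fun ω => εjk ω / π j (Z ω)) P[|ECE])
    (hIntkε : Integrable (fun ω => εkj ω / π k (Z ω)) P[|ECE])
    -- the matrices
    (Λjk Saipw Ssaipw N₁ N₂ : Matrix (Fin 2) (Fin 2) ℝ)
    (hΛjk : Λjk = !![lamjk, cjk; cjk, lamkj])
    (hSaipw : Saipw =
      !![∫ ω, εjk ω ^ 2 / π j (Z ω) ∂P[|ECE], 0;
         0, ∫ ω, εkj ω ^ 2 / π k (Z ω) ∂P[|ECE]]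
      + Λjk - !![δjk * δjk, δjk * δkj; δkj * δjk, δkj * δkj])
    (hSsaipw : Ssaipw =
      !![∫ ω, (εjk ω - δjk) ^ 2 / π j (Z ω) ∂P[|ECE], 0;
         0, ∫ ω, (εkj ω - δkj) ^ 2 / π k (Z ω) ∂P[|ECE]]
      + Λjk)
    (hN₁ : N₁ =
      !![δjk ^ 2 * ∫ ω, (1 / π j (Z ω) - 1) ∂P[|ECE], -(δjk * δkj);
         -(δjk * δkj), δkj ^ 2 * ∫ ω, (1 / π k (Z ω) - 1) ∂P[|ECE]])
    (hN₂ : N₂ =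
      !![2 * (δjk * cov P[|ECE] εjk (fun ω => 1 / π j (Z ω))), 0;
         0, 2 * (δkj * cov P[|ECE] εkj (fun ω => 1 / π k (Z ω)))]) :
    Saipw - Ssaipw = N₁ + N₂
    ∧ ((∀ᵐ ω ∂P[|ECE], π j (Z ω) + π k (Z ω) ≤ 1) → N₁.PosSemidef)
    ∧ ((∀ᵐ ω ∂P[|ECE], π j (Z ω) + π k (Z ω) ≤ 1) →
        0 ≤ δjk * cov P[|ECE] εjk (fun ω => 1 / π j (Z ω)) →
        0 ≤ δkj * cov P[|ECE] εkj (fun ω => 1 / π k (Z ω)) →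
        (Saipw - Ssaipw).PosSemidef) :=
  stmt_13_general P Z Y hZ hY2 π hπmeas j k ECE hECE hECEpos X μjk hμjk2 μkj hμkj2 εjk εkj hεjk hεkj
    δjk δkj hδjk hδkj hIntj hIntk hIntj1 hIntk1 hIntjε hIntkε Λjk Saipw Ssaipw N₁ N₂ hSaipw hSsaipw
    hN₁ hN₂
end
end

section
/- (Corollary 4.) Under Assumption 1 and the stratification setup, assume conditions (i)–(iii): (i) E_jk(ε_jk | S) = δ_jk and E_jk(ε_kj | S) = δ_kj almost surely; (ii) Cov_jk(ε_jk, μ_jk(X) | S) = 0 and Cov_jk(ε_kj, μ_kj(X) | S) = 0 almost surely; (iii) Cov_jk(ε_jk, μ_kj(X) | S) = 0 and Cov_jk(ε_kj, μ_jk(X) | S) = 0 almost surely. Let Σ_ps = diag( E_jk[Var_jk(Y^(j)|S)/π_j(S)], E_jk[Var_jk(Y^(k)|S)/π_k(S)] ) + Γ_jk and Σ_aps = E_jk[ diag( Var_jk(ε_jk|S)/π_j(S), Var_jk(ε_kj|S)/π_k(S) ) + Λ_jk(S) ] + Γ_jk, where Γ_jk is the ECE-conditional covariance matrix of (E_jk(Y^(j)|S),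 E_jk(Y^(k)|S)) and Λ_jk(S) has diagonal entries λ_jk(S) = Var_jk(Y^(j)|S) − Var_jk(ε_jk|S), λ_kj(S) = Var_jk(Y^(k)|S) − Var_jk(ε_kj|S) and off-diagonal entries c_jk(S) = Cov_jk(Y^(j),Y^(k)|S) − Cov_jk(ε_jk,ε_kj|S). Then Σ_ps − Σ_aps equals the 2×2 matrix with diagonal entries E_jk[ (1/π_j(S) − 1) Var_jk(μ_jk(X)|S) ] and E_jk[ (1/π_k(S) − 1) Var_jk(μ_kj(X)|S) ] and both off-diagonal entries −E_jk[ Cov_jk(μ_jk(X), μ_kj(X) | S) ]; moreover, if π_j(S) + π_k(S) ≤ 1 almost surely on the ECE event, this matrix is positive semidefinite. -/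
open MeasureTheory ProbabilityTheory Filter Set

noncomputable section

/-- The conditional mean `E_μ(f | S)` of `f` given a finitely-valued variable `S`,
as a function on the sample space. -/
def condMeanOn {Ω 𝓢 : Type*} [MeasurableSpace Ω] (μ : Measure Ω) (S : Ω → 𝓢) (f : Ω → ℝ) :
    Ω → ℝ :=
  fun ω => ∫ x, f x ∂μ[|{ω' | S ω' = S ω}]

/-- The conditional variance `Var_μ(f | S)` of `f` given `S`, as a function on the
sample space. -/
def condVarOn {Ω 𝓢 : Type*} [MeasurableSpace Ω] (μ : Measure Ω) (S : Ω → 𝓢) (f : Ω → ℝ) :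
    Ω → ℝ :=
  fun ω => ProbabilityTheory.variance f μ[|{ω' | S ω' = S ω}]

/-- The conditional covariance `Cov_μ(f, g | S)` of `f` and `g` given `S`, as a function on
the sample space. -/
def condCovOn {Ω 𝓢 : Type*} [MeasurableSpace Ω] (μ : Measure Ω) (S : Ω → 𝓢) (f g : Ω → ℝ) :
    Ω → ℝ :=
  fun ω => cov μ[|{ω' | S ω' = S ω}] f g

/-! Write `Y^(j) = ε_jk + μ_jk(X)` and `Y^(k) = ε_kj + μ_kj(X)`. Conditions (ii) and (iii) kill the
cross terms in the stratum-wise decompositions of `Var(Y^(j) | S)` and `Cov(Y^(j), Y^(k) | S)`,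
which leaves exactly the variances and the covariance of the working models: this is the displayed
form of `Σ_ps − Σ_aps`. If moreover `π_j + π_k ≤ 1`, then `(1/π_j − 1)(1/π_k − 1) ≥ 1`, so by
Cauchy–Schwarz in each stratum the squared off-diagonal integrand is at most the product of the
diagonal ones. Cauchy–Schwarz once more (a nonnegative quadratic has nonpositive discriminant)
carries this over to the integrals, and a symmetric 2 × 2 matrix with nonnegative diagonal and
determinant is positive semidefinite. -/

open Function

lemma quadratic_form_nonneg_of_sq_le {a b c : ℝ} (ha : 0 ≤ a) (hb : 0 ≤ b) (h : c ^ 2 ≤ a * b)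
    (x y : ℝ) : 0 ≤ a * (x * x) + 2 * c * x * y + b * (y * y) := by
  rcases ha.eq_or_lt with rfl | ha
  · obtain rfl : c = 0 := by nlinarith
    simpa using mul_nonneg hb (mul_self_nonneg y)
  · nlinarith [sq_nonneg (a * x + c * y), mul_nonneg (sub_nonneg.2 h) (sq_nonneg y)]

lemma Matrix.posSemidef_fin_two_of_sq_le {a b c : ℝ} (ha : 0 ≤ a) (hb : 0 ≤ b)
    (h : c ^ 2 ≤ a * b) : (!![a, c; c, b] : Matrix (Fin 2) (Fin 2) ℝ).PosSemidef := by
  rw [Matrix.posSemidef_iff_dotProduct_mulVec]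
  refine ⟨by ext i i'; fin_cases i <;> fin_cases i' <;> rfl, fun x =>
    (quadratic_form_nonneg_of_sq_le ha hb h (x 0) (x 1)).trans_eq ?_⟩
  simp [dotProduct, Matrix.mulVec, Fin.sum_univ_two]
  ring

section

variable {Ω : Type*} [MeasurableSpace Ω] {μ : Measure Ω}

lemma sq_integral_le_integral_mul_integral {a b c : Ω → ℝ} (ha : Integrable a μ)
    (hb : Integrable b μ) (hc : Integrable c μ)
    (h : ∀ᵐ ω ∂μ, 0 ≤ a ω ∧ 0 ≤ b ω ∧ c ω ^ 2 ≤ a ω * b ω) :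
    (∫ ω, c ω ∂μ) ^ 2 ≤ (∫ ω, a ω ∂μ) * ∫ ω, b ω ∂μ := by
  have hquad : ∀ t, 0 ≤ (∫ ω, a ω ∂μ) * (t * t) + 2 * (∫ ω, c ω ∂μ) * t + ∫ ω, b ω ∂μ := by
    intro t
    have hint : 0 ≤ ∫ ω, (a ω * (t * t) + 2 * c ω * t + b ω) ∂μ :=
      integral_nonneg_of_ae (h.mono fun ω hω => by
        simpa using quadratic_form_nonneg_of_sq_le hω.1 hω.2.1 hω.2.2 t 1)
    rwa [integral_add (by fun_prop) hb, integral_add (by fun_prop) (by fun_prop),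
      integral_mul_const, integral_mul_const, integral_const_mul] at hint
  have := discrim_le_zero hquad
  rw [discrim] at this
  linarith

lemma sq_covariance_le_variance_mul_variance [IsFiniteMeasure μ] {f g : Ω → ℝ} (hf : MemLp f 2 μ)
    (hg : MemLp g 2 μ) : cov[f, g; μ] ^ 2 ≤ Var[f; μ] * Var[g; μ] := by
  have hf' := hf.sub (memLp_const μ[f])
  have hg' := hg.sub (memLp_const μ[g])
  rw [variance_eq_integral hf.aemeasurable, variance_eq_integral hg.aemeasurable]
  refine sq_integral_le_integral_mul_integral hf'.integrable_sq hg'.integrable_sq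
    (hf'.integrable_mul hg') (Eventually.of_forall fun ω => ⟨sq_nonneg _, sq_nonneg _, ?_⟩)
  exact (mul_pow _ _ 2).le

lemma MeasureTheory.MemLp.cond {p : ENNReal} {f : Ω → ℝ} (hf : MemLp f p μ) (s : Set Ω) :
    MemLp f p μ[|s] := by
  rcases eq_or_ne (μ s) 0 with hs | hs
  · rw [cond_eq_zero_of_meas_eq_zero hs]
    exact memLp_measure_zero
  · exact (hf.restrict s).smul_measure (ENNReal.inv_ne_top.mpr hs)

lemma cov_eq_covariance (f g : Ω → ℝ) : cov μ f g = cov[f, g; μ] := rfl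

section Strata

variable {𝓢 : Type*} {S : Ω → 𝓢} {e m e' m' : Ω → ℝ}

lemma condCovOn_comm (S : Ω → 𝓢) (f g : Ω → ℝ) : condCovOn μ S f g = condCovOn μ S g f := by
  ext ω
  exact covariance_comm f g

lemma condVarOn_nonneg (S : Ω → 𝓢) (f : Ω → ℝ) (ω : Ω) : 0 ≤ condVarOn μ S f ω :=
  variance_nonneg _ _

lemma condVarOn_add (he : MemLp e 2 μ) (hm : MemLp m 2 μ) (ω : Ω) :
    condVarOn μ S (e + m) ω = condVarOn μ S e ω + 2 * condCovOn μ S e m ω + condVarOn μ S m ω :=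
  variance_add (he.cond _) (hm.cond _)

lemma condCovOn_add_add (he : MemLp e 2 μ) (hm : MemLp m 2 μ) (he' : MemLp e' 2 μ)
    (hm' : MemLp m' 2 μ) (ω : Ω) :
    condCovOn μ S (e + m) (e' + m') ω = condCovOn μ S e e' ω + condCovOn μ S e m' ω
      + condCovOn μ S m e' ω + condCovOn μ S m m' ω := by
  simp only [condCovOn, cov_eq_covariance]
  rw [covariance_add_left (he.cond _) (hm.cond _) ((he'.add hm').cond _),
    covariance_add_right (he.cond _) (he'.cond _) (hm'.cond _),
    covariance_add_right (hm.cond _) (he'.cond _) (hm'.cond _)]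
  ring

lemma sq_condCovOn_le (he : MemLp e 2 μ) (hm : MemLp m 2 μ) (ω : Ω) :
    condCovOn μ S e m ω ^ 2 ≤ condVarOn μ S e ω * condVarOn μ S m ω :=
  sq_covariance_le_variance_mul_variance (he.cond _) (hm.cond _)

lemma factorsThrough_condVarOn (S : Ω → 𝓢) (f : Ω → ℝ) : (condVarOn μ S f).FactorsThrough S :=
  fun _ _ h => by simp only [condVarOn, h]

lemma factorsThrough_condCovOn (S : Ω → 𝓢) (f g : Ω → ℝ) :
    (condCovOn μ S f g).FactorsThrough S :=
  fun _ _ h => by simp only [condCovOn, h]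

lemma integral_condCovOn_add_add_sub (he : MemLp e 2 μ) (hm : MemLp m 2 μ) (he' : MemLp e' 2 μ)
    (hm' : MemLp m' 2 μ) (hem' : ∀ᵐ ω ∂μ, condCovOn μ S e m' ω = 0)
    (he'm : ∀ᵐ ω ∂μ, condCovOn μ S e' m ω = 0) :
    ∫ ω, (condCovOn μ S (e + m) (e' + m') ω - condCovOn μ S e e' ω) ∂μ
      = ∫ ω, condCovOn μ S m m' ω ∂μ := by
  refine integral_congr_ae ?_
  filter_upwards [hem', he'm] with ω h1 h2
  rw [condCovOn_add_add he hm he' hm', h1, condCovOn_comm S m e', h2]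
  ring

end Strata

lemma one_le_one_div_sub_one_mul {p q : ℝ} (hp : 0 < p) (hq : 0 < q) (hpq : p + q ≤ 1) :
    1 ≤ (1 / p - 1) * (1 / q - 1) := by
  rw [div_sub_one hp.ne', div_sub_one hq.ne', div_mul_div_comm, le_div_iff₀ (by positivity)]
  nlinarith

section Stratified

variable [IsFiniteMeasure μ] {𝓢 : Type*} [Finite 𝓢] [MeasurableSpace 𝓢]
  [MeasurableSingletonClass 𝓢] {S : Ω → 𝓢} {p q f g e m : Ω → ℝ}

lemma integrable_of_factorsThrough (hS : Measurable S) {F : Ω → ℝ} (hF : F.FactorsThrough S) :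
    Integrable F μ := by
  rw [show F = extend S F 0 ∘ S from funext fun ω => (hF.extend_apply 0 ω).symm]
  exact Integrable.of_finite.comp_measurable hS

lemma integral_condVarOn_div_sub (hS : Measurable S) (hp : p.FactorsThrough S)
    (he : MemLp e 2 μ) (hm : MemLp m 2 μ) (hem : ∀ᵐ ω ∂μ, condCovOn μ S e m ω = 0) :
    (∫ ω, condVarOn μ S (e + m) ω / p ω ∂μ)
      - ∫ ω, (condVarOn μ S e ω / p ω + (condVarOn μ S (e + m) ω - condVarOn μ S e ω)) ∂μ
      = ∫ ω, (1 / p ω - 1) * condVarOn μ S m ω ∂μ := by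
  have hY := factorsThrough_condVarOn (μ := μ) S (e + m)
  have hE := factorsThrough_condVarOn (μ := μ) S e
  rw [← integral_sub (integrable_of_factorsThrough hS fun a b h => by rw [hY h, hp h])
    (integrable_of_factorsThrough hS fun a b h => by rw [hY h, hE h, hp h])]
  refine integral_congr_ae (hem.mono fun ω h0 => ?_)
  simp only [condVarOn_add he hm, h0]
  ring

lemma sq_integral_condCovOn_le (hS : Measurable S) (hp : p.FactorsThrough S)
    (hq : q.FactorsThrough S) (hpq : ∀ᵐ ω ∂μ, 0 < p ω ∧ 0 < q ω ∧ p ω + q ω ≤ 1)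
    (hf : MemLp f 2 μ) (hg : MemLp g 2 μ) :
    (∫ ω, condCovOn μ S f g ω ∂μ) ^ 2
      ≤ (∫ ω, (1 / p ω - 1) * condVarOn μ S f ω ∂μ)
        * ∫ ω, (1 / q ω - 1) * condVarOn μ S g ω ∂μ := by
  have hF := factorsThrough_condVarOn (μ := μ) S f
  have hG := factorsThrough_condVarOn (μ := μ) S g
  refine sq_integral_le_integral_mul_integral
    (integrable_of_factorsThrough hS fun a b h => by rw [hF h, hp h])
    (integrable_of_factorsThrough hS fun a b h => by rw [hG h, hq h])
    (integrable_of_factorsThrough hS (factorsThrough_condCovOn S f g))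
    (hpq.mono fun ω ⟨hp0, hq0, hsum⟩ => ?_)
  have hu : 0 ≤ 1 / p ω - 1 := sub_nonneg.2 (one_le_one_div hp0 (by linarith))
  have hv : 0 ≤ 1 / q ω - 1 := sub_nonneg.2 (one_le_one_div hq0 (by linarith))
  have hVf := condVarOn_nonneg (μ := μ) S f ω
  have hVg := condVarOn_nonneg (μ := μ) S g ω
  refine ⟨mul_nonneg hu hVf, mul_nonneg hv hVg, (sq_condCovOn_le hf hg ω).trans ?_⟩
  nlinarith [one_le_one_div_sub_one_mul hp0 hq0 hsum, mul_nonneg hVf hVg]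

lemma posSemidef_integral_condVarOn_condCovOn (hS : Measurable S) (hp : p.FactorsThrough S)
    (hq : q.FactorsThrough S) (hpq : ∀ᵐ ω ∂μ, 0 < p ω ∧ 0 < q ω ∧ p ω + q ω ≤ 1)
    (hf : MemLp f 2 μ) (hg : MemLp g 2 μ) :
    (!![∫ ω, (1 / p ω - 1) * condVarOn μ S f ω ∂μ, -∫ ω, condCovOn μ S f g ω ∂μ;
        -∫ ω, condCovOn μ S f g ω ∂μ, ∫ ω, (1 / q ω - 1) * condVarOn μ S g ω ∂μ]
      : Matrix (Fin 2) (Fin 2) ℝ).PosSemidef := by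
  refine Matrix.posSemidef_fin_two_of_sq_le (integral_nonneg_of_ae ?_) (integral_nonneg_of_ae ?_)
    ((neg_sq _).trans_le (sq_integral_condCovOn_le hS hp hq hpq hf hg))
  · filter_upwards [hpq] with ω ⟨hp0, hq0, hsum⟩
    exact mul_nonneg (sub_nonneg.2 (one_le_one_div hp0 (by linarith))) (condVarOn_nonneg S f ω)
  · filter_upwards [hpq] with ω ⟨hp0, hq0, hsum⟩
    exact mul_nonneg (sub_nonneg.2 (one_le_one_div hq0 (by linarith))) (condVarOn_nonneg S g ω)

end Stratified

end

theorem stmt_15_general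
    {Ω 𝓩 : Type*} [MeasurableSpace Ω]
    [MeasurableSpace 𝓩]
    (P : Measure Ω)
    {J : ℕ} (Z : Ω → 𝓩) (Y : Fin J → Ω → ℝ)
    (hZ : Measurable Z)
    (hY2 : ∀ m, MemLp (Y m) 2 P)
    (π : Fin J → 𝓩 → ℝ) (hπmeas : ∀ m, Measurable (π m))
    (j k : Fin J)
    -- the ECE event, with positive probability
    (ECE : Set Ω) (hECE : ECE = {ω | 0 < π j (Z ω) ∧ 0 < π k (Z ω)})
    -- stratification: S is a function of Z with finitely many values, and π_j(Z), π_k(Z)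
    -- are constant on every level of S
    {𝓢 : Type*} [Fintype 𝓢] [MeasurableSpace 𝓢] [MeasurableSingletonClass 𝓢]
    (S : Ω → 𝓢) (hSZ : ∃ g : 𝓩 → 𝓢, Measurable g ∧ ∀ ω, S ω = g (Z ω))
    (hconstj : ∀ ω ω', S ω = S ω' → π j (Z ω) = π j (Z ω'))
    (hconstk : ∀ ω ω', S ω = S ω' → π k (Z ω) = π k (Z ω'))
    -- working model: a covariate sub-vector X of W and a function μjk of X
    {𝓧 : Type*}
    (X : Ω → 𝓧)
    (μjk : 𝓧 → ℝ) (hμjk2 : MemLp (fun ω => μjk (X ω)) 2 P)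
    (μkj : 𝓧 → ℝ) (hμkj2 : MemLp (fun ω => μkj (X ω)) 2 P)
    -- residuals and δ's
    (εjk εkj : Ω → ℝ)
    (hεjk : ∀ ω, εjk ω = Y j ω - μjk (X ω)) (hεkj : ∀ ω, εkj ω = Y k ω - μkj (X ω))
    -- conditions (i)–(iii)
    (hii1 : ∀ᵐ ω ∂P[|ECE], condCovOn P[|ECE] S εjk (fun x => μjk (X x)) ω = 0)
    (hii2 : ∀ᵐ ω ∂P[|ECE], condCovOn P[|ECE] S εkj (fun x => μkj (X x)) ω = 0)
    (hiii1 : ∀ᵐ ω ∂P[|ECE], condCovOn P[|ECE] S εjk (fun x => μkj (X x)) ω = 0)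
    (hiii2 : ∀ᵐ ω ∂P[|ECE], condCovOn P[|ECE] S εkj (fun x => μjk (X x)) ω = 0)
    -- the matrices
    (Γjk Sps Saps M : Matrix (Fin 2) (Fin 2) ℝ)
    (hSps : Sps =
      !![∫ ω, condVarOn P[|ECE] S (Y j) ω / π j (Z ω) ∂P[|ECE], 0;
         0, ∫ ω, condVarOn P[|ECE] S (Y k) ω / π k (Z ω) ∂P[|ECE]]
      + Γjk)
    (hSaps : Saps =
      !![∫ ω, (condVarOn P[|ECE] S εjk ω / π j (Z ω)
              + (condVarOn P[|ECE] S (Y j) ω - condVarOn P[|ECE] S εjk ω)) ∂P[|ECE],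
           ∫ ω, (condCovOn P[|ECE] S (Y j) (Y k) ω - condCovOn P[|ECE] S εjk εkj ω) ∂P[|ECE];
         ∫ ω, (condCovOn P[|ECE] S (Y j) (Y k) ω - condCovOn P[|ECE] S εjk εkj ω) ∂P[|ECE],
           ∫ ω, (condVarOn P[|ECE] S εkj ω / π k (Z ω)
              + (condVarOn P[|ECE] S (Y k) ω - condVarOn P[|ECE] S εkj ω)) ∂P[|ECE]]
      + Γjk)
    (hM : M =
      !![∫ ω, (1 / π j (Z ω) - 1) * condVarOn P[|ECE] S (fun x => μjk (X x)) ω ∂P[|ECE],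
           -∫ ω, condCovOn P[|ECE] S (fun x => μjk (X x)) (fun x => μkj (X x)) ω ∂P[|ECE];
         -∫ ω, condCovOn P[|ECE] S (fun x => μjk (X x)) (fun x => μkj (X x)) ω ∂P[|ECE],
           ∫ ω, (1 / π k (Z ω) - 1) * condVarOn P[|ECE] S (fun x => μkj (X x)) ω ∂P[|ECE]]) :
    Sps - Saps = M
    ∧ ((∀ᵐ ω ∂P[|ECE], π j (Z ω) + π k (Z ω) ≤ 1) → M.PosSemidef) := by
  obtain ⟨g, hg, hgZ⟩ := hSZ
  have hS : Measurable S := by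
    rw [show S = g ∘ Z from funext hgZ]
    exact hg.comp hZ
  have hECEm : MeasurableSet ECE := hECE ▸
    (measurableSet_lt measurable_const ((hπmeas j).comp hZ)).inter
      (measurableSet_lt measurable_const ((hπmeas k).comp hZ))
  have hμjk2' := hμjk2.cond ECE
  have hμkj2' := hμkj2.cond ECE
  have hεjk2 : MemLp εjk 2 P[|ECE] := by
    rw [show εjk = Y j - fun ω => μjk (X ω) from funext hεjk]
    exact ((hY2 j).sub hμjk2).cond ECE
  have hεkj2 : MemLp εkj 2 P[|ECE] := by
    rw [show εkj = Y k - fun ω => μkj (X ω) from funext hεkj]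
    exact ((hY2 k).sub hμkj2).cond ECE
  have hYj : Y j = εjk + fun ω => μjk (X ω) := funext fun ω => by simp [hεjk]
  have hYk : Y k = εkj + fun ω => μkj (X ω) := funext fun ω => by simp [hεkj]
  have hpj : (fun ω => π j (Z ω)).FactorsThrough S := fun a b h => hconstj a b h
  have hpk : (fun ω => π k (Z ω)).FactorsThrough S := fun a b h => hconstk a b h
  refine ⟨?_, fun hsum =>
    hM ▸ posSemidef_integral_condVarOn_condCovOn hS hpj hpk ?_ hμjk2' hμkj2'⟩
  · rw [hSps, hSaps, add_sub_add_right_eq_sub, hM, hYj, hYk,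
      ← integral_condVarOn_div_sub hS hpj hεjk2 hμjk2' hii1,
      ← integral_condVarOn_div_sub hS hpk hεkj2 hμkj2' hii2,
      ← integral_condCovOn_add_add_sub hεjk2 hμjk2' hεkj2 hμkj2' hiii1 hiii2]
    ext a b
    fin_cases a <;> fin_cases b <;> simp
  · filter_upwards [ae_cond_mem hECEm, hsum] with ω hω hω'
    rw [hECE] at hω
    exact ⟨hω.1, hω.2, hω'⟩

/-- Corollary 4: under the calibration conditions (i)–(iii),
Σ_ps − Σ_aps has the displayed form and is positive semidefinite. -/
theorem stmt_15
    {Ω 𝓩 𝓦 : Type*} [MeasurableSpace Ω] [StandardBorelSpace Ω]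
    [MeasurableSpace 𝓩] [MeasurableSpace 𝓦]
    (P : Measure Ω) [IsProbabilityMeasure P]
    {J : ℕ} (Z : Ω → 𝓩) (W : Ω → 𝓦) (A : Ω → Fin J) (Y : Fin J → Ω → ℝ)
    (hZ : Measurable Z) (hW : Measurable W) (hA : Measurable A)
    (hY : ∀ m, Measurable (Y m)) (hY2 : ∀ m, MemLp (Y m) 2 P)
    (π : Fin J → 𝓩 → ℝ) (hπmeas : ∀ m, Measurable (π m))
    (hπ01 : ∀ m z, π m z ∈ Set.Icc (0:ℝ) 1)
    (hπsum : ∀ z, ∑ m, π m z = 1)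
    -- Assumption 1: A ⟂ (W, Y^(1),…,Y^(J)) given Z
    (hCI : CondIndepFun (MeasurableSpace.comap Z inferInstance) hZ.comap_le A
        (fun ω => (W ω, fun m => Y m ω)) P)
    -- Assumption 1: P(A = m | Z) = π_m(Z) a.s.
    (hprop : ∀ m : Fin J,
      (P[ Set.indicator {ω' | A ω' = m} (fun _ => (1:ℝ)) | MeasurableSpace.comap Z inferInstance])
        =ᵐ[P] fun ω => π m (Z ω))
    (j k : Fin J) (hjk : j ≠ k)
    -- the ECE event, with positive probability
    (ECE : Set Ω) (hECE : ECE = {ω | 0 < π j (Z ω) ∧ 0 < π k (Z ω)})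
    (hECEpos : P ECE ≠ 0)
    -- stratification: S is a function of Z with finitely many values, and π_j(Z), π_k(Z)
    -- are constant on every level of S
    {𝓢 : Type*} [Fintype 𝓢] [MeasurableSpace 𝓢] [MeasurableSingletonClass 𝓢]
    (S : Ω → 𝓢) (hSZ : ∃ g : 𝓩 → 𝓢, Measurable g ∧ ∀ ω, S ω = g (Z ω))
    (hconstj : ∀ ω ω', S ω = S ω' → π j (Z ω) = π j (Z ω'))
    (hconstk : ∀ ω ω', S ω = S ω' → π k (Z ω) = π k (Z ω'))
    -- working model: a covariate sub-vector X of W and a function μjk of X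
    {𝓧 : Type*} [MeasurableSpace 𝓧]
    (X : Ω → 𝓧) (hXW : ∃ g : 𝓦 → 𝓧, Measurable g ∧ ∀ ω, X ω = g (W ω))
    (μjk : 𝓧 → ℝ) (hμjkm : Measurable μjk) (hμjk2 : MemLp (fun ω => μjk (X ω)) 2 P)
    (μkj : 𝓧 → ℝ) (hμkjm : Measurable μkj) (hμkj2 : MemLp (fun ω => μkj (X ω)) 2 P)
    -- residuals and δ's
    (εjk εkj : Ω → ℝ)
    (hεjk : ∀ ω, εjk ω = Y j ω - μjk (X ω)) (hεkj : ∀ ω, εkj ω = Y k ω - μkj (X ω))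
    (δjk δkj : ℝ)
    (hδjk : δjk = ∫ ω, εjk ω ∂P[|ECE]) (hδkj : δkj = ∫ ω, εkj ω ∂P[|ECE])
    -- conditions (i)–(iii)
    (hU1 : ∀ᵐ ω ∂P[|ECE], condMeanOn P[|ECE] S εjk ω = δjk)
    (hU2 : ∀ᵐ ω ∂P[|ECE], condMeanOn P[|ECE] S εkj ω = δkj)
    (hii1 : ∀ᵐ ω ∂P[|ECE], condCovOn P[|ECE] S εjk (fun x => μjk (X x)) ω = 0)
    (hii2 : ∀ᵐ ω ∂P[|ECE], condCovOn P[|ECE] S εkj (fun x => μkj (X x)) ω = 0)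
    (hiii1 : ∀ᵐ ω ∂P[|ECE], condCovOn P[|ECE] S εjk (fun x => μkj (X x)) ω = 0)
    (hiii2 : ∀ᵐ ω ∂P[|ECE], condCovOn P[|ECE] S εkj (fun x => μjk (X x)) ω = 0)
    -- the matrices
    (Γjk Sps Saps M : Matrix (Fin 2) (Fin 2) ℝ)
    (hΓjk : Γjk =
      !![variance (condMeanOn P[|ECE] S (Y j)) P[|ECE],
           cov P[|ECE] (condMeanOn P[|ECE] S (Y j)) (condMeanOn P[|ECE] S (Y k));
         cov P[|ECE] (condMeanOn P[|ECE] S (Y j)) (condMeanOn P[|ECE] S (Y k)),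
           variance (condMeanOn P[|ECE] S (Y k)) P[|ECE]])
    (hSps : Sps =
      !![∫ ω, condVarOn P[|ECE] S (Y j) ω / π j (Z ω) ∂P[|ECE], 0;
         0, ∫ ω, condVarOn P[|ECE] S (Y k) ω / π k (Z ω) ∂P[|ECE]]
      + Γjk)
    (hSaps : Saps =
      !![∫ ω, (condVarOn P[|ECE] S εjk ω / π j (Z ω)
              + (condVarOn P[|ECE] S (Y j) ω - condVarOn P[|ECE] S εjk ω)) ∂P[|ECE],
           ∫ ω, (condCovOn P[|ECE] S (Y j) (Y k) ω - condCovOn P[|ECE] S εjk εkj ω) ∂P[|ECE];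
         ∫ ω, (condCovOn P[|ECE] S (Y j) (Y k) ω - condCovOn P[|ECE] S εjk εkj ω) ∂P[|ECE],
           ∫ ω, (condVarOn P[|ECE] S εkj ω / π k (Z ω)
              + (condVarOn P[|ECE] S (Y k) ω - condVarOn P[|ECE] S εkj ω)) ∂P[|ECE]]
      + Γjk)
    (hM : M =
      !![∫ ω, (1 / π j (Z ω) - 1) * condVarOn P[|ECE] S (fun x => μjk (X x)) ω ∂P[|ECE],
           -∫ ω, condCovOn P[|ECE] S (fun x => μjk (X x)) (fun x => μkj (X x)) ω ∂P[|ECE];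
         -∫ ω, condCovOn P[|ECE] S (fun x => μjk (X x)) (fun x => μkj (X x)) ω ∂P[|ECE],
           ∫ ω, (1 / π k (Z ω) - 1) * condVarOn P[|ECE] S (fun x => μkj (X x)) ω ∂P[|ECE]]) :
    Sps - Saps = M
    ∧ ((∀ᵐ ω ∂P[|ECE], π j (Z ω) + π k (Z ω) ≤ 1) → M.PosSemidef) :=
  stmt_15_general P Z Y hZ hY2 π hπmeas j k ECE hECE S hSZ hconstj hconstk X μjk hμjk2 μkj hμkj2 εjk
    εkj hεjk hεkj hii1 hii2 hiii1 hiii2 Γjk Sps Saps M hSps hSaps hM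
end
end
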